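/- Let $U\in\mathbb{R}^{m\times r}$ and $V\in\mathbb{R}^{n\times r}$. Then $U^\top U = V^\top V$ if and only if $U$ and $V$ have the same vector of singular values (counted with multiplicity, padded with zeros to length $r$) and for any singular value decomposition $V = P\,\widetilde{\mathrm{Diag}}(\sigma(V))\,Q^\top$ with $P\in\mathcal{O}^n$, $Q\in\mathcal{O}^r$, there exists $R\in\mathcal{O}^m$ such that $U = R\,\widetilde{\mathrm{Diag}}(\sigma(U))\,Q^\top$. -/

import Mathlib

open Matrix Finset

def mdot {m n : ℕ} (A B : Matrix (Fin m) (Fin n) ℝ) : ℝ := ∑ i, ∑ j, A i j * B i j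

noncomputable def frob {m n : ℕ} (A : Matrix (Fin m) (Fin n) ℝ) : ℝ := Real.sqrt (mdot A A)

def IsOrth {k : ℕ} (R : Matrix (Fin k) (Fin k) ℝ) : Prop := Rᵀ * R = 1

def rdg (a b : ℕ) {c : ℕ} (x : Fin c → ℝ) : Matrix (Fin a) (Fin b) ℝ :=
  Matrix.of fun i j => if h : (i : ℕ) = (j : ℕ) ∧ (i : ℕ) < c then x ⟨i, h.2⟩ else 0

noncomputable def descSort {k : ℕ} (f : Fin k → ℝ) : Fin k → ℝ := fun i => f (Tuple.sort f i.rev)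

theorem Matrix.isHermitian_transpose_mul_self {m n : Type*} [Fintype m] (A : Matrix m n ℝ) :
    (Aᵀ * A).IsHermitian := by
  rw [Matrix.IsHermitian, Matrix.conjTranspose_eq_transpose_of_trivial, Matrix.transpose_mul,
    Matrix.transpose_transpose]

noncomputable def sigCol {a r : ℕ} (X : Matrix (Fin a) (Fin r) ℝ) : Fin r → ℝ :=
  descSort fun i => Real.sqrt ((Matrix.isHermitian_transpose_mul_self X).eigenvalues i)

noncomputable def sigRow {a b : ℕ} (X : Matrix (Fin a) (Fin b) ℝ) : Fin a → ℝ :=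
  descSort fun i => Real.sqrt ((Matrix.isHermitian_mul_conjTranspose_self X).eigenvalues i)

noncomputable def toDual {m n : ℕ} (G : Matrix (Fin m) (Fin n) ℝ) :
    Matrix (Fin m) (Fin n) ℝ →L[ℝ] ℝ :=
  LinearMap.toContinuousLinearMap
    { toFun := fun Y => mdot G Y
      map_add' := fun Y Z => by
        simp [mdot, Matrix.add_apply, mul_add, Finset.sum_add_distrib]
      map_smul' := fun c Y => by
        simp [mdot, Matrix.smul_apply, smul_eq_mul, Finset.mul_sum, mul_left_comm] }

noncomputable def enorm2 {k : ℕ} (v : Fin k → ℝ) : ℝ := Real.sqrt (∑ i, v i ^ 2)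

def subdiff {m n : ℕ} (f : Matrix (Fin m) (Fin n) ℝ → ℝ) (X : Matrix (Fin m) (Fin n) ℝ) :
    Set (Matrix (Fin m) (Fin n) ℝ) := {G | ∀ Y, f X + mdot G (Y - X) ≤ f Y}

/-! Two matrices `A, B` with the same shape satisfy `AᵀA = BᵀB` exactly when `A = R B` for an
orthogonal `R`: equal Gram matrices make `B x ↦ A x` a well-defined isometry on the column space
of `B`, which extends to an isometry of the whole space. Hence, for orthogonal `Q`,
`X = R D Qᵀ` with `R` orthogonal iff `XᵀX = Q (DᵀD) Qᵀ`. Since `σ(X)` vanishes beyond the number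
of rows of `X`, `DᵀD = diag(σ(X)²)` for the padded diagonal `D` of `σ(X)`, whatever its number of
rows. Both sides of the equivalence therefore say `UᵀU = Q diag(σ²) Qᵀ = VᵀV`; the converse
direction gets its orthogonal `Q` from a spectral decomposition of `VᵀV` with sorted
eigenvalues, which also yields an SVD of `V`. -/

theorem LinearMap.exists_linearIsometry_comp_eq_of_norm_eq {𝕜 V E : Type*} [RCLike 𝕜]
    [AddCommGroup V] [Module 𝕜 V] [NormedAddCommGroup E] [InnerProductSpace 𝕜 E]
    [FiniteDimensional 𝕜 E] {f g : V →ₗ[𝕜] E} (h : ∀ x, ‖f x‖ = ‖g x‖) :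
    ∃ ρ : E →ₗᵢ[𝕜] E, ∀ x, ρ (g x) = f x := by
  have hker : ker g ≤ ker f := fun x hx => by
    rw [mem_ker] at hx ⊢
    rw [← norm_eq_zero, h, hx, norm_zero]
  let φ : range g →ₗ[𝕜] E := (ker g).liftQ f hker ∘ₗ g.quotKerEquivRange.symm.toLinearMap
  have hφ : ∀ x, φ ⟨g x, mem_range_self g x⟩ = f x := fun x => by
    simp [φ, quotKerEquivRange_symm_apply_image]
  let L : range g →ₗᵢ[𝕜] E := ⟨φ, by rintro ⟨-, x, rfl⟩; rw [hφ, h]; rfl⟩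
  exact ⟨L.extend, fun x => (L.extend_apply ⟨g x, _⟩).trans (hφ x)⟩

namespace Matrix

variable {𝕜 ι κ : Type*} [RCLike 𝕜] [Fintype ι] [DecidableEq ι] [Fintype κ] [DecidableEq κ]

theorem norm_toEuclideanLin_sq (A : Matrix ι κ 𝕜) (x : EuclideanSpace 𝕜 κ) :
    ‖toEuclideanLin A x‖ ^ 2 = RCLike.re (inner 𝕜 x (toEuclideanLin (Aᴴ * A) x)) := by
  rw [toLpLin_mul_same, LinearMap.comp_apply, toEuclideanLin_conjTranspose_eq_adjoint,
    LinearMap.adjoint_inner_right, inner_self_eq_norm_sq]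

theorem exists_mem_unitaryGroup_mul_eq_of_conjTranspose_mul_self_eq {A B : Matrix ι κ 𝕜}
    (h : Aᴴ * A = Bᴴ * B) : ∃ R ∈ unitaryGroup ι 𝕜, A = R * B := by
  have hnorm : ∀ x, ‖toEuclideanLin A x‖ = ‖toEuclideanLin B x‖ := fun x => by
    rw [← sq_eq_sq₀ (norm_nonneg _) (norm_nonneg _), norm_toEuclideanLin_sq,
      norm_toEuclideanLin_sq, h]
  obtain ⟨ρ, hρ⟩ := LinearMap.exists_linearIsometry_comp_eq_of_norm_eq hnorm
  refine ⟨toEuclideanLin.symm ρ.toLinearMap, ?_, ?_⟩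
  · rw [mem_unitaryGroup_iff', star_eq_conjTranspose]
    apply toEuclideanLin.injective
    rw [toLpLin_mul_same, toEuclideanLin_conjTranspose_eq_adjoint, LinearEquiv.apply_symm_apply,
      LinearIsometry.adjoint_comp_self', toLpLin_one]
  · apply toEuclideanLin.injective
    ext1 x
    rw [toLpLin_mul_same, LinearMap.comp_apply, LinearEquiv.apply_symm_apply]
    exact (hρ x).symm

end Matrix

theorem Matrix.submatrix_id_mul_diagonal_comp_mul_transpose {α ι κ κ' : Type*} [CommSemiring α]
    [Fintype κ] [DecidableEq κ] [Fintype κ'] [DecidableEq κ'] (Q : Matrix ι κ α) (d : κ → α)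
    (τ : κ' ≃ κ) :
    Q.submatrix id τ * diagonal (d ∘ τ) * (Q.submatrix id τ)ᵀ = Q * diagonal d * Qᵀ := by
  rw [← submatrix_diagonal_equiv, transpose_submatrix, submatrix_mul_equiv,
    submatrix_mul_equiv, submatrix_id_id]

theorem isOrth_iff_mem_unitaryGroup {k : ℕ} {Q : Matrix (Fin k) (Fin k) ℝ} :
    IsOrth Q ↔ Q ∈ unitaryGroup (Fin k) ℝ := by
  rw [mem_unitaryGroup_iff', star_eq_conjTranspose, conjTranspose_eq_transpose_of_trivial, IsOrth]

theorem IsOrth.mul_transpose {k : ℕ} {Q : Matrix (Fin k) (Fin k) ℝ} (hQ : IsOrth Q) :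
    Q * Qᵀ = 1 :=
  mul_eq_one_comm.mp hQ

theorem IsOrth.submatrix_id {k : ℕ} {Q : Matrix (Fin k) (Fin k) ℝ} (hQ : IsOrth Q)
    (τ : Equiv.Perm (Fin k)) : IsOrth (Q.submatrix id τ) := by
  rw [IsOrth, transpose_submatrix, ← submatrix_mul _ _ _ _ _ Function.bijective_id, hQ,
    submatrix_one_equiv]

theorem IsOrth.eq_mul_transpose_iff {k r : ℕ} {Q : Matrix (Fin r) (Fin r) ℝ} (hQ : IsOrth Q)
    {A M : Matrix (Fin k) (Fin r) ℝ} : A = M * Qᵀ ↔ A * Q = M := by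
  constructor
  · rintro rfl
    rw [Matrix.mul_assoc, hQ, Matrix.mul_one]
  · rintro rfl
    rw [Matrix.mul_assoc, hQ.mul_transpose, Matrix.mul_one]

theorem IsOrth.transpose_mul_mul_eq_iff {r : ℕ} {Q : Matrix (Fin r) (Fin r) ℝ} (hQ : IsOrth Q)
    {G M : Matrix (Fin r) (Fin r) ℝ} : Qᵀ * G * Q = M ↔ G = Q * M * Qᵀ := by
  constructor
  · rintro rfl
    rw [← Matrix.mul_assoc, ← Matrix.mul_assoc, hQ.mul_transpose, Matrix.one_mul,
      Matrix.mul_assoc, hQ.mul_transpose, Matrix.mul_one]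
  · rintro rfl
    rw [← Matrix.mul_assoc, ← Matrix.mul_assoc, hQ, Matrix.one_mul, Matrix.mul_assoc, hQ,
      Matrix.mul_one]

theorem exists_isOrth_mul_eq_iff {m r : ℕ} (A B : Matrix (Fin m) (Fin r) ℝ) :
    (∃ R : Matrix (Fin m) (Fin m) ℝ, IsOrth R ∧ A = R * B) ↔ Aᵀ * A = Bᵀ * B := by
  constructor
  · rintro ⟨R, hR, rfl⟩
    rw [transpose_mul, Matrix.mul_assoc, ← Matrix.mul_assoc Rᵀ, hR, Matrix.one_mul]
  · intro h
    simp only [← conjTranspose_eq_transpose_of_trivial] at h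
    obtain ⟨R, hR, hAR⟩ := exists_mem_unitaryGroup_mul_eq_of_conjTranspose_mul_self_eq h
    exact ⟨R, isOrth_iff_mem_unitaryGroup.mpr hR, hAR⟩

theorem exists_isOrth_eq_mul_mul_transpose_iff {m r : ℕ} {Q : Matrix (Fin r) (Fin r) ℝ}
    (hQ : IsOrth Q) (A B : Matrix (Fin m) (Fin r) ℝ) :
    (∃ R : Matrix (Fin m) (Fin m) ℝ, IsOrth R ∧ A = R * B * Qᵀ) ↔
      Aᵀ * A = Q * (Bᵀ * B) * Qᵀ := by
  rw [← hQ.transpose_mul_mul_eq_iff]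
  simp only [hQ.eq_mul_transpose_iff]
  rw [exists_isOrth_mul_eq_iff]
  simp only [transpose_mul, Matrix.mul_assoc]

theorem Matrix.IsHermitian.exists_isOrth_eq_mul_diagonal_mul_transpose {k : ℕ}
    {H : Matrix (Fin k) (Fin k) ℝ} (hH : H.IsHermitian) :
    ∃ Q, IsOrth Q ∧ H = Q * diagonal hH.eigenvalues * Qᵀ := by
  refine ⟨hH.eigenvectorUnitary, isOrth_iff_mem_unitaryGroup.mpr hH.eigenvectorUnitary.2, ?_⟩
  conv_lhs => rw [hH.spectral_theorem]
  simp [RCLike.ofReal_real_eq_id, star_eq_conjTranspose]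

theorem antitone_descSort {k : ℕ} (f : Fin k → ℝ) : Antitone (descSort f) :=
  fun _ _ hij => Tuple.monotone_sort f (Fin.rev_le_rev.mpr hij)

theorem Antitone.eq_zero_of_card_ne_zero_le {k N : ℕ} {g : Fin k → ℝ} (hg : Antitone g)
    (h0 : ∀ i, 0 ≤ g i) (hcard : #{j | g j ≠ 0} ≤ N) {i : Fin k} (hi : N ≤ i) : g i = 0 := by
  by_contra hne
  have hsub : Iic i ⊆ ({j | g j ≠ 0} : Finset (Fin k)) := fun j hj => by
    simp only [mem_filter, mem_univ, true_and]
    intro hj0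
    exact hne (le_antisymm (hj0 ▸ hg (mem_Iic.mp hj)) (h0 i))
  have := card_le_card hsub
  rw [Fin.card_Iic] at this
  omega

theorem sigCol_eq_of_transpose_mul_self_eq {m n r : ℕ} {U : Matrix (Fin m) (Fin r) ℝ}
    {V : Matrix (Fin n) (Fin r) ℝ} (h : Uᵀ * U = Vᵀ * V) : sigCol U = sigCol V := by
  simp only [sigCol, h]

theorem eigenvalues_transpose_mul_self_nonneg {a r : ℕ} (X : Matrix (Fin a) (Fin r) ℝ)
    (i : Fin r) : 0 ≤ (isHermitian_transpose_mul_self X).eigenvalues i :=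
  (posSemidef_conjTranspose_mul_self X).eigenvalues_nonneg i

theorem exists_sigCol_eq_sqrt_eigenvalues_comp {a r : ℕ} (X : Matrix (Fin a) (Fin r) ℝ) :
    ∃ τ : Equiv.Perm (Fin r),
      ∀ i, sigCol X i = √((isHermitian_transpose_mul_self X).eigenvalues (τ i)) :=
  ⟨Fin.revPerm.trans (Tuple.sort _), fun _ => rfl⟩

theorem exists_isOrth_transpose_mul_self_eq {a r : ℕ} (X : Matrix (Fin a) (Fin r) ℝ) :
    ∃ Q, IsOrth Q ∧ Xᵀ * X = Q * diagonal (fun i => sigCol X i ^ 2) * Qᵀ := by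
  obtain ⟨Q, hQ, hX⟩ :=
    (isHermitian_transpose_mul_self X).exists_isOrth_eq_mul_diagonal_mul_transpose
  obtain ⟨τ, hτ⟩ := exists_sigCol_eq_sqrt_eigenvalues_comp X
  have hsq : (fun i => sigCol X i ^ 2) = (isHermitian_transpose_mul_self X).eigenvalues ∘ τ :=
    funext fun i => by rw [hτ, Real.sq_sqrt (eigenvalues_transpose_mul_self_nonneg X _)]; rfl
  exact ⟨_, hQ.submatrix_id τ, by rw [hsq, submatrix_id_mul_diagonal_comp_mul_transpose, ← hX]⟩

theorem card_ne_zero_sigCol_le {a r : ℕ} (X : Matrix (Fin a) (Fin r) ℝ) :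
    #{j | sigCol X j ≠ 0} ≤ a := by
  obtain ⟨τ, hτ⟩ := exists_sigCol_eq_sqrt_eigenvalues_comp X
  calc #{j | sigCol X j ≠ 0}
      = #{j | (isHermitian_transpose_mul_self X).eigenvalues j ≠ 0} :=
        card_equiv τ fun j => by
          simp [hτ, Real.sqrt_eq_zero (eigenvalues_transpose_mul_self_nonneg X _)]
    _ = (Xᵀ * X).rank := by
        rw [(isHermitian_transpose_mul_self X).rank_eq_card_non_zero_eigs, Fintype.card_subtype]
    _ = X.rank := X.rank_transpose_mul_self
    _ ≤ a := X.rank_le_height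

theorem sigCol_eq_zero_of_le {a r : ℕ} (X : Matrix (Fin a) (Fin r) ℝ) {i : Fin r}
    (hi : a ≤ i) : sigCol X i = 0 :=
  (antitone_descSort _).eq_zero_of_card_ne_zero_le (g := sigCol X) (fun _ => Real.sqrt_nonneg _)
    (card_ne_zero_sigCol_le X) hi

theorem rdg_apply {a b : ℕ} (x : Fin b → ℝ) (i : Fin a) (j : Fin b) :
    rdg a b x i j = if (i : ℕ) = j then x j else 0 := by
  by_cases h : (i : ℕ) = j <;> simp [rdg, h]

theorem transpose_rdg_mul_rdg {a b : ℕ} (x : Fin b → ℝ) (hx : ∀ j : Fin b, a ≤ j → x j = 0) :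
    (rdg a b x)ᵀ * rdg a b x = diagonal (fun j => x j ^ 2) := by
  ext j j'
  rw [mul_apply, diagonal_apply]
  by_cases hj : (j : ℕ) < a
  · rw [Finset.sum_eq_single ⟨j, hj⟩ (fun i _ hi => ?_) (by simp)]
    · by_cases hjj : j = j'
      · simp [rdg_apply, hjj, sq]
      · simp [rdg_apply, hjj, Fin.val_ne_of_ne hjj]
    · simp [rdg_apply, Fin.val_ne_of_ne hi]
  · simp [rdg_apply, hx j (not_lt.mp hj)]

theorem transpose_rdg_sigCol_mul_rdg_sigCol {a r : ℕ} (X : Matrix (Fin a) (Fin r) ℝ) :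
    (rdg a r (sigCol X))ᵀ * rdg a r (sigCol X) = diagonal fun i => sigCol X i ^ 2 :=
  transpose_rdg_mul_rdg _ fun _ => sigCol_eq_zero_of_le X

theorem exists_isOrth_eq_mul_rdg_sigCol_mul_transpose_iff {a r : ℕ}
    {Q : Matrix (Fin r) (Fin r) ℝ} (hQ : IsOrth Q) (X : Matrix (Fin a) (Fin r) ℝ) :
    (∃ R : Matrix (Fin a) (Fin a) ℝ, IsOrth R ∧ X = R * rdg a r (sigCol X) * Qᵀ) ↔
      Xᵀ * X = Q * diagonal (fun i => sigCol X i ^ 2) * Qᵀ := by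
  rw [exists_isOrth_eq_mul_mul_transpose_iff hQ, transpose_rdg_sigCol_mul_rdg_sigCol]

theorem balanced_pair_iff (m n r : ℕ)
    (U : Matrix (Fin m) (Fin r) ℝ) (V : Matrix (Fin n) (Fin r) ℝ) :
    Uᵀ * U = Vᵀ * V ↔
      (sigCol U = sigCol V ∧
        ∀ (P : Matrix (Fin n) (Fin n) ℝ) (Q : Matrix (Fin r) (Fin r) ℝ),
          IsOrth P → IsOrth Q → V = P * rdg n r (sigCol V) * Qᵀ →
          ∃ R : Matrix (Fin m) (Fin m) ℝ, IsOrth R ∧ U = R * rdg m r (sigCol U) * Qᵀ) := by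
  constructor
  · intro h
    have hσ := sigCol_eq_of_transpose_mul_self_eq h
    refine ⟨hσ, fun P Q hP hQ hV => ?_⟩
    rw [exists_isOrth_eq_mul_rdg_sigCol_mul_transpose_iff hQ, h, hσ]
    exact (exists_isOrth_eq_mul_rdg_sigCol_mul_transpose_iff hQ V).1 ⟨P, hP, hV⟩
  · rintro ⟨hσ, hsvd⟩
    obtain ⟨Q, hQ, hVQ⟩ := exists_isOrth_transpose_mul_self_eq V
    obtain ⟨P, hP, hV⟩ := (exists_isOrth_eq_mul_rdg_sigCol_mul_transpose_iff hQ V).2 hVQ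
    rw [(exists_isOrth_eq_mul_rdg_sigCol_mul_transpose_iff hQ U).1 (hsvd P Q hP hQ hV), hVQ, hσ]
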